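/- Let $A \in \mathbb{R}^{m \times n}$, let $[m] = \mathcal{P}_1 \uplus \cdots \uplus \mathcal{P}_p$ with $|\mathcal{P}_l| = m_l$, and fix targets $0 \le k_l \le m_l$. Let $S \subseteq [m]$ with $|S \cap \mathcal{P}_l| = t_l \le k_l$ for all $l$, set $t = \sum_l t_l$ and $k = \sum_l k_l$. Fix $j \in [p]$ with $t_j < k_j$ and $i \in \mathcal{P}_j \setminus S$. Let $B = A - \pi_S(A)$ with rows $b_1,\dots,b_m$ and $C_i = B - \pi_{\{i\}}(B)$ (projection with respect to the rows of $B$). Then $\sum_{T} \det(A_{S \cup \{i\} \cup T} A_{S \cup \{i\} \cup T}^T) = \det(A_S A_S^T) \cdot \|b_i\|^2 \cdot |c'(C_i C_i^T)|$, where the sum runs over all $T \subseteq [m] \setminus (S \cup \{i\})$ with $|T \cap \mathcal{P}_j| = k_j - t_j - 1$ and $|T \cap \mathcal{P}_l| = k_l - t_l$ for all $l \ne j$, and $c'(C_i C_i^T) = c_{m_1-k_1+t_1, \dots, m_j-k_j+t_j+1, \dots, m_p-k_p+t_p}(C_i C_i^T)$ is the indicated coefficient of the multivariate characteristic polynomial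 of $C_i C_i^T$. -/

import Mathlib

/-!
Subtracting from the rows `v u`, `u ∈ U`, their projections onto the span of the rows indexed by
`S` is a unitriangular change of rows that makes the Gram matrix block diagonal, so
`det Gram(S ∪ U) = det Gram(S) · det Gram(residuals of U)`. Applied twice, every summand on
the left becomes `det(A_S A_Sᵀ) · ‖b_i‖² · det Gram_C(T)`. On the other side,
`det(M - Σ x_l I_l) = Σ_T ∏_{x ∉ T} (-x_{part x}) · det M_T`, so a coefficient of the multivariate
characteristic polynomial is, up to sign, the sum of the principal minors `det M_T` over the `T`
whose complements have the prescribed sizes on every block. For `M = C Cᵀ` these minors are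
nonnegative Gram determinants, and they vanish unless `T` avoids `S ∪ {i}`, where `C` has zero
rows; there the size conditions on `Tᶜ` and on `T` coincide.
-/

/-- `res v S` is the matrix `B = v - π_S(v)`: its `i`-th row is the component of the `i`-th
row `v i` orthogonal to the span of the rows of `v` indexed by `S`. -/
noncomputable def res {m n : ℕ} (v : Fin m → EuclideanSpace ℝ (Fin n)) (S : Finset (Fin m)) :
    Fin m → EuclideanSpace ℝ (Fin n) :=
  fun i => v i - (Submodule.orthogonalProjection (Submodule.span ℝ (v '' (S : Set (Fin m)))) (v i) :
    EuclideanSpace ℝ (Fin n))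

/-- `gramDet v S = det(v_S v_S^T)`: the determinant of the Gram matrix of the rows of `v`
indexed by `S`. -/
noncomputable def gramDet {m n : ℕ} (v : Fin m → EuclideanSpace ℝ (Fin n))
    (S : Finset (Fin m)) : ℝ :=
  Matrix.det (Matrix.of fun i j : {x // x ∈ S} => (inner ℝ (v i.1) (v j.1) : ℝ))

/-- `gram v = v vᵀ`, the Gram matrix of the rows of `v`. -/
noncomputable def gram {m n : ℕ} (v : Fin m → EuclideanSpace ℝ (Fin n)) :
    Matrix (Fin m) (Fin m) ℝ :=
  Matrix.of fun i j => (inner ℝ (v i) (v j) : ℝ)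

/-- The coefficient `c_{e₁,…,e_p}(M)` of the monomial `x₁^{e₁} ⋯ x_p^{e_p}` in the multivariate
characteristic polynomial `det(M - x₁I₁ - ⋯ - x_pI_p)`, where the partition
`[m] = 𝒫₁ ⊎ ⋯ ⊎ 𝒫_p` is encoded by the labelling function `part` (so `𝒫_l = part⁻¹(l)`),
and `I_l` is the diagonal 0/1 matrix supported on `𝒫_l`. -/
noncomputable def mcharCoeff {m p : ℕ} (M : Matrix (Fin m) (Fin m) ℝ) (part : Fin m → Fin p)
    (e : Fin p → ℕ) : ℝ :=
  MvPolynomial.coeff (Finsupp.equivFunOnFinite.symm e)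
    (Matrix.det (Matrix.of fun i j =>
      MvPolynomial.C (M i j) - (if i = j then MvPolynomial.X (part i) else 0)))

open Finset Matrix

namespace Matrix

variable {ι R : Type*} [Fintype ι] [DecidableEq ι] [CommRing R]

theorem det_of_ite_mem_one (M : Matrix ι ι R) (T : Finset ι) :
    det (of fun i j => if i ∈ T then M i j else (1 : Matrix ι ι R) i j) =
      det (M.submatrix ((↑) : T → ι) (↑)) := by
  rw [← det_submatrix_equiv_self (Equiv.sumCompl (· ∈ T))]
  have hblocks : (of fun i j => if i ∈ T then M i j else (1 : Matrix ι ι R) i j).submatrix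
      (Equiv.sumCompl (· ∈ T)) (Equiv.sumCompl (· ∈ T)) =
      fromBlocks (M.submatrix ((↑) : T → ι) (↑)) (M.submatrix (↑) (↑)) 0 1 := by
    ext (a | a) (b | b)
    · simp [a.2]
    · simp [a.2]
    · simp [a.2, one_apply_ne (ne_of_mem_of_not_mem b.2 a.2).symm]
    · simp [a.2, one_apply, Subtype.ext_iff]
  rw [hblocks, det_fromBlocks_zero₂₁, det_one, mul_one]

theorem det_add_diagonal (M : Matrix ι ι R) (d : ι → R) :
    det (M + diagonal d) =
      ∑ T : Finset ι, (∏ i ∈ Tᶜ, d i) * det (M.submatrix ((↑) : T → ι) (↑)) := by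
  have hrows : det (M + diagonal d) =
      detRowAlternating ((fun i => M i) + fun i => d i • (1 : Matrix ι ι R) i) := by
    unfold det
    congr 1
    ext i j
    simp [diagonal_apply, one_apply]
  rw [hrows, detRowAlternating.map_add_univ]
  refine sum_congr rfl fun T _ => ?_
  set N : ι → ι → R := fun i j => if i ∈ T then M i j else (1 : Matrix ι ι R) i j
  have hpiece : T.piecewise (fun i => M i) (fun i => d i • (1 : Matrix ι ι R) i) =
      Tᶜ.piecewise (fun i => d i • N i) N := by
    ext i j
    by_cases hi : i ∈ T <;> simp [N, hi, Finset.piecewise]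
  rw [hpiece, ← det_of_ite_mem_one, ← smul_eq_mul]
  exact detRowAlternating.toMultilinearMap.map_piecewise_smul d N Tᶜ

theorem gram_sum_smul {F ι κ : Type*} [NormedAddCommGroup F] [InnerProductSpace ℝ F]
    [Fintype κ] (E : Matrix ι κ ℝ) (w : κ → F) :
    gram ℝ (fun i => ∑ k, E i k • w k) = E * gram ℝ w * Eᵀ := by
  ext i j
  simp only [gram_apply, mul_apply, transpose_apply, sum_inner, inner_sum, real_inner_smul_left,
    real_inner_smul_right, sum_mul]
  exact sum_congr rfl fun a _ => sum_congr rfl fun b _ => by ring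

end Matrix

theorem Finsupp.sum_single_one_eq_equivFunOnFinite_symm_iff {α β : Type*} [Fintype β]
    [DecidableEq β] (s : Finset α) (f : α → β) (e : β → ℕ) :
    ∑ x ∈ s, Finsupp.single (f x) 1 = Finsupp.equivFunOnFinite.symm e ↔
      ∀ b, #(s.filter (f · = b)) = e b := by
  simp [Finsupp.ext_iff, Finsupp.finsetSum_apply, Finsupp.single_apply]

theorem forall_card_filter_compl_eq_iff {α β : Type*} [Fintype α] [DecidableEq α] [DecidableEq β]
    {f : α → β} {c r : β → ℕ} (hc : ∀ b, #(univ.filter (f · = b)) = c b) (hr : ∀ b, r b ≤ c b)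
    (T : Finset α) :
    (∀ b, #(Tᶜ.filter (f · = b)) = c b - r b) ↔ ∀ b, #(T.filter (f · = b)) = r b := by
  have hsplit : ∀ b, #(T.filter (f · = b)) + #(Tᶜ.filter (f · = b)) = c b := fun b => by
    rw [← hc, ← card_union_of_disjoint (disjoint_filter_filter disjoint_compl_right),
      ← filter_union, union_compl]
  exact forall_congr' fun b => by have := hsplit b; have := hr b; omega

open MvPolynomial in
theorem mcharCoeff_eq_sum_det_submatrix {m p : ℕ} (M : Matrix (Fin m) (Fin m) ℝ)
    (part : Fin m → Fin p) (e : Fin p → ℕ) :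
    mcharCoeff M part e = (-1) ^ (∑ l, e l) *
      ∑ T ∈ univ.filter (fun T : Finset (Fin m) => ∀ l, #(Tᶜ.filter (part · = l)) = e l),
        det (M.submatrix ((↑) : T → Fin m) (↑)) := by
  have hchar : (of fun i j => C (M i j) - if i = j then X (part i) else 0) =
      M.map C + diagonal fun i => -X (part i) := by
    ext i j
    by_cases h : i = j <;> simp [h, sub_eq_add_neg]
  have hterm : ∀ T : Finset (Fin m), (∏ x ∈ Tᶜ, -X (part x)) *
      det ((M.map C).submatrix ((↑) : T → Fin m) (↑)) =
      monomial (∑ x ∈ Tᶜ, Finsupp.single (part x) 1)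
        ((-1) ^ #Tᶜ * det (M.submatrix ((↑) : T → Fin m) (↑))) := by
    intro T
    have hX : ∀ x, (-X (part x) : MvPolynomial (Fin p) ℝ) =
        monomial (Finsupp.single (part x) 1) (-1) := fun x => by
      rw [X, ← map_neg]
    have hdet : det ((M.map (C : ℝ → MvPolynomial (Fin p) ℝ)).submatrix ((↑) : T → Fin m) (↑)) =
        C (det (M.submatrix ((↑) : T → Fin m) (↑))) :=
      (RingHom.map_det C _).symm
    rw [prod_congr rfl fun x _ => hX x, ← monomial_sum_prod, prod_const, hdet, mul_comm,
      C_mul_monomial, mul_comm]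
  rw [mcharCoeff, hchar, det_add_diagonal, coeff_sum]
  simp only [hterm, coeff_monomial, Finsupp.sum_single_one_eq_equivFunOnFinite_symm_iff]
  rw [← sum_filter, mul_sum]
  refine sum_congr rfl fun T hT => ?_
  rw [card_eq_sum_card_fiberwise (f := part) (t := univ) fun _ _ => mem_univ _,
    sum_congr rfl fun l _ => (mem_filter.mp hT).2 l]

section Residual

variable {m n : ℕ} (v : Fin m → EuclideanSpace ℝ (Fin n)) (S : Finset (Fin m))

theorem gramDet_eq_det_gram : gramDet v S = det (Matrix.gram ℝ fun x : S => v x) := rfl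

theorem res_add_starProjection (u : Fin m) :
    res v S u + (Submodule.span ℝ (v '' S)).starProjection (v u) = v u :=
  sub_add_cancel _ _

theorem res_apply_of_mem {s : Fin m} (hs : s ∈ S) : res v S s = 0 := by
  rw [res, sub_eq_zero, eq_comm]
  exact Submodule.starProjection_eq_self_iff.mpr
    (Submodule.subset_span (Set.mem_image_of_mem _ hs))

theorem res_apply_of_eq_zero {u : Fin m} (hu : v u = 0) : res v S u = 0 := by
  simp [res, hu]

theorem inner_res_eq_zero {s : Fin m} (hs : s ∈ S) (u : Fin m) : inner ℝ (v s) (res v S u) = 0 :=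
  (Submodule.mem_orthogonal _ _).mp (Submodule.sub_starProjection_mem_orthogonal _) _
    (Submodule.subset_span (Set.mem_image_of_mem _ hs))

theorem exists_sum_smul_eq_starProjection (u : Fin m) :
    ∃ g : S → ℝ, ∑ s, g s • v s = (Submodule.span ℝ (v '' S)).starProjection (v u) := by
  have hspan : v '' S = Set.range fun s : S => v s := by
    ext
    simp
  rw [← Submodule.mem_span_range_iff_exists_fun, ← hspan]
  exact Submodule.coe_mem _

theorem gramDet_union {U : Finset (Fin m)} (hd : Disjoint S U) :
    gramDet v (S ∪ U) = gramDet v S * gramDet (res v S) U := by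
  choose G hG using fun u : U => exists_sum_smul_eq_starProjection v S u
  let w : S ⊕ U → EuclideanSpace ℝ (Fin n) := Sum.elim (fun s => v s) (fun u => res v S u)
  let E : Matrix (S ⊕ U) (S ⊕ U) ℝ := fromBlocks 1 0 (of G) 1
  have hrows : (fun a => ∑ k, E a k • w k) = fun a => v (Equiv.Finset.union S U hd a) := by
    funext a
    rcases a with s | u
    · simp [E, w, Fintype.sum_sum_type, one_apply, ite_smul]
    · simp only [E, w, Fintype.sum_sum_type, fromBlocks_apply₂₁, fromBlocks_apply₂₂, of_apply,
        Sum.elim_inl, Sum.elim_inr, hG, one_apply, ite_smul, one_smul, zero_smul, sum_ite_eq,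
        mem_univ, if_true, Equiv.Finset.union_inr]
      exact (add_comm _ _).trans (res_add_starProjection v S u)
  have hblocks : Matrix.gram ℝ w = fromBlocks (Matrix.gram ℝ fun s : S => v s) 0 0
      (Matrix.gram ℝ fun u : U => res v S u) := by
    ext (s | u) (s' | u')
    · rfl
    · exact inner_res_eq_zero v S s.2 u'
    · exact (real_inner_comm _ _).trans (inner_res_eq_zero v S s'.2 u)
    · rfl
  have hE : det E = 1 := by simp [E]
  rw [gramDet_eq_det_gram, ← det_submatrix_equiv_self (Equiv.Finset.union S U hd)]
  change det (Matrix.gram ℝ fun a => v (Equiv.Finset.union S U hd a)) = _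
  rw [← hrows, gram_sum_smul, det_mul, det_mul, det_transpose, hE, one_mul, mul_one, hblocks,
    det_fromBlocks_zero₁₂]
  rfl

theorem gramDet_nonneg : 0 ≤ gramDet v S :=
  (posSemidef_gram ℝ _).det_nonneg

theorem gramDet_eq_zero_of_mem_of_eq_zero {x : Fin m} (hx : x ∈ S) (hv : v x = 0) :
    gramDet v S = 0 :=
  det_eq_zero_of_row_eq_zero ⟨x, hx⟩ fun _ => by simp [hv]

theorem gramDet_singleton (i : Fin m) : gramDet v {i} = ‖v i‖ ^ 2 := by
  rw [gramDet, det_unique, of_apply, ← real_inner_self_eq_norm_sq]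
  rfl

theorem gramDet_insert {i : Fin m} (hi : i ∉ S) :
    gramDet v (insert i S) = ‖v i‖ ^ 2 * gramDet (res v {i}) S := by
  rw [insert_eq, gramDet_union v {i} (disjoint_singleton_left.mpr hi), gramDet_singleton]

theorem gramDet_insert_union {i : Fin m} (hi : i ∉ S) {T : Finset (Fin m)}
    (hT : Disjoint (insert i S) T) :
    gramDet v (insert i (S ∪ T)) =
      gramDet v S * ‖res v S i‖ ^ 2 * gramDet (res (res v S) {i}) T := by
  have hiT : i ∉ T := disjoint_left.mp hT (mem_insert_self i S)
  have hST : Disjoint S (insert i T) :=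
    disjoint_insert_right.mpr ⟨hi, (disjoint_insert_left.mp hT).2⟩
  rw [← union_insert, gramDet_union v S hST, gramDet_insert _ _ hiT, mul_assoc]

end Residual

theorem abs_mcharCoeff_gram {m n p : ℕ} (v : Fin m → EuclideanSpace ℝ (Fin n))
    (part : Fin m → Fin p) (e : Fin p → ℕ) :
    |mcharCoeff (gram v) part e| =
      ∑ T ∈ univ.filter (fun T : Finset (Fin m) => ∀ l, #(Tᶜ.filter (part · = l)) = e l),
        gramDet v T := by
  rw [mcharCoeff_eq_sum_det_submatrix, abs_mul, abs_pow, abs_neg, abs_one, one_pow, one_mul]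
  exact abs_of_nonneg (sum_nonneg fun T _ => gramDet_nonneg v T)

theorem sum_gramDet_filter_subset_compl {m n : ℕ} (v : Fin m → EuclideanSpace ℝ (Fin n))
    {Z : Finset (Fin m)} (hZ : ∀ x ∈ Z, v x = 0) (P : Finset (Fin m) → Prop) [DecidablePred P] :
    ∑ T ∈ univ.filter (fun T => T ⊆ Zᶜ ∧ P T), gramDet v T =
      ∑ T ∈ univ.filter P, gramDet v T := by
  refine sum_subset (fun T hT => ?_) fun T hT hT' => ?_
  · simp only [mem_filter] at hT ⊢
    exact ⟨hT.1, hT.2.2⟩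
  · simp only [mem_filter, mem_univ, true_and, not_and] at hT hT'
    obtain ⟨x, hxT, hxZ⟩ := not_subset.mp fun h => hT' h hT
    exact gramDet_eq_zero_of_mem_of_eq_zero v T hxT (hZ x (by simpa using hxZ))

theorem statement6_general {m n p : ℕ} (A : Fin m → EuclideanSpace ℝ (Fin n)) (part : Fin m → Fin p)
    (mi ki ti : Fin p → ℕ)
    (hmi : ∀ l, (Finset.univ.filter (fun x => part x = l)).card = mi l)
    (hki : ∀ l, ki l ≤ mi l)
    (S : Finset (Fin m))
    (htk : ∀ l, ti l ≤ ki l)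
    (j : Fin p) (hj : ti j < ki j)
    (i : Fin m) (hiS : i ∉ S) :
    (∑ T ∈ Finset.univ.filter (fun T : Finset (Fin m) =>
        T ⊆ (insert i S)ᶜ ∧ ∀ l, (T.filter (fun x => part x = l)).card =
          (if l = j then ki j - ti j - 1 else ki l - ti l)),
        gramDet A (insert i (S ∪ T)))
      = gramDet A S * ‖res A S i‖ ^ 2 *
        |mcharCoeff (gram (res (res A S) {i})) part
          (fun l => if l = j then mi j - ki j + ti j + 1 else mi l - ki l + ti l)| := by
  set r : Fin p → ℕ := fun l => if l = j then ki j - ti j - 1 else ki l - ti l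
  -- ℕ-subtraction: `ki j - ti j - 1` is exact because `ti j < ki j`.
  have hcount : ∀ l, r l ≤ mi l ∧
      (if l = j then mi j - ki j + ti j + 1 else mi l - ki l + ti l) = mi l - r l := fun l => by
    have := hki l
    rcases eq_or_ne l j with rfl | h
    · simp only [r, if_pos]
      omega
    · simp only [r, if_neg h]
      have := htk l
      omega
  have hvanish : ∀ x ∈ insert i S, res (res A S) {i} x = 0 := fun x hx => by
    rcases mem_insert.mp hx with rfl | hxS
    · exact res_apply_of_mem _ _ (mem_singleton_self x)
    · exact res_apply_of_eq_zero _ _ (res_apply_of_mem A S hxS)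
  have he : (fun l => if l = j then mi j - ki j + ti j + 1 else mi l - ki l + ti l) =
      fun l => mi l - r l := funext fun l => (hcount l).2
  rw [he, abs_mcharCoeff_gram, ← sum_gramDet_filter_subset_compl _ hvanish, mul_sum]
  refine sum_congr (filter_congr fun T _ => ?_) fun T hT => ?_
  · rw [forall_card_filter_compl_eq_iff hmi (fun l => (hcount l).1) T]
  · exact gramDet_insert_union A S hiS (subset_compl_iff_disjoint_left.mp (mem_filter.mp hT).2.1)

/-- with partition `[m] = 𝒫₁ ⊎ ⋯ ⊎ 𝒫_p` (`|𝒫_l| = m_l`), targets `k_l ≤ m_l`,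
a set `S` with `|S ∩ 𝒫_l| = t_l ≤ k_l`, an index `j` with `t_j < k_j`, and `i ∈ 𝒫_j \ S`,
letting `B = A - π_S(A)` and `C_i = B - π_{{i}}(B)`, the sum of `det(A_{S∪{i}∪T} A_{S∪{i}∪T}^T)`
over all `T ⊆ [m] \ (S∪{i})` with `|T ∩ 𝒫_j| = k_j - t_j - 1` and `|T ∩ 𝒫_l| = k_l - t_l`
for `l ≠ j` equals `det(A_S A_S^T) ⬝ ‖b_i‖² ⬝ |c'(C_i C_i^T)|`, where
`c' = c_{m₁-k₁+t₁, …, m_j-k_j+t_j+1, …, m_p-k_p+t_p}`. -/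
theorem statement6 {m n p : ℕ} (A : Fin m → EuclideanSpace ℝ (Fin n)) (part : Fin m → Fin p)
    (mi ki ti : Fin p → ℕ)
    (hmi : ∀ l, (Finset.univ.filter (fun x => part x = l)).card = mi l)
    (hki : ∀ l, ki l ≤ mi l)
    (S : Finset (Fin m))
    (hti : ∀ l, (S.filter (fun x => part x = l)).card = ti l)
    (htk : ∀ l, ti l ≤ ki l)
    (j : Fin p) (hj : ti j < ki j)
    (i : Fin m) (hij : part i = j) (hiS : i ∉ S) :
    (∑ T ∈ Finset.univ.filter (fun T : Finset (Fin m) =>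
        T ⊆ (insert i S)ᶜ ∧ ∀ l, (T.filter (fun x => part x = l)).card =
          (if l = j then ki j - ti j - 1 else ki l - ti l)),
        gramDet A (insert i (S ∪ T)))
      = gramDet A S * ‖res A S i‖ ^ 2 *
        |mcharCoeff (gram (res (res A S) {i})) part
          (fun l => if l = j then mi j - ki j + ti j + 1 else mi l - ki l + ti l)| :=
  statement6_general A part mi ki ti hmi hki S htk j hj i hiS
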